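/- Let N ≥ 1, λ > 0 and s ∈ ℝ^N. Define K := { u ∈ ℝ^N : there exist reals z_{ij} for 1 ≤ i < j ≤ N with |z_{ij}| ≤ λ and u_i = Σ_{j>i} z_{ij} − Σ_{j<i} z_{ji} for every i }. Then K is a nonempty compact convex set, the function p_s(π) := (1/2)Σ_{i=1}^N (π_i − s_i)² + λ Σ_{1≤i<j≤N} |π_i − π_j| has a unique minimizer π* over ℝ^N, and the metric projection u* of s onto K satisfies u* = s − π*. -/

import Mathlib

noncomputable section

/-- The fused-lasso objective `p_s(π) = (1/2) Σ (π_i − s_i)² + λ Σ_{i<j} |π_i − π_j|`. -/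
def pfun {N : ℕ} (lam : ℝ) (s π : Fin N → ℝ) : ℝ :=
  (1 / 2) * ∑ i, (π i - s i) ^ 2 + lam * ∑ i, ∑ j, if i < j then |π i - π j| else 0

/-- Euclidean norm on `ℝ^N`. -/
def eunorm {k : ℕ} (y : Fin k → ℝ) : ℝ := Real.sqrt (∑ i, y i ^ 2)

/-!
The set `K` is the image of the box `|z_ij| ≤ λ` (`i < j`) under the linear map
`D = edgeDivergence`, and
`⟪D z, π⟫ = Σ_{i<j} z_ij (π_i - π_j)`. Hence the support function of `K` is
`λ Σ_{i<j} |π_i - π_j|`, attained at `z_ij = λ sign (π_i - π_j)`, so that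
`p_s(π) = ½‖π - s‖² + σ_K(π)`. If `u` is the projection of `s` onto `K`, the variational
inequality gives `σ_K(s - u) = ⟪u, s - u⟫`, and completing the square yields
`p_s(π) ≥ p_s(s - u) + ½‖π - (s - u)‖²`: `s - u` is the minimizer, and the only one.
-/

open Finset Matrix

section

variable {ι : Type*} [Fintype ι]

theorem exists_mem_forall_dotProduct_sub_nonpos {K : Set (ι → ℝ)}
    (hne : K.Nonempty) (hclosed : IsClosed K) (hconv : Convex ℝ K) (s : ι → ℝ) :
    ∃ u ∈ K, ∀ w ∈ K, (w - u) ⬝ᵥ (s - u) ≤ 0 := by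
  let e := (PiLp.continuousLinearEquiv 2 ℝ (fun _ : ι => ℝ)).symm
  have hconv' : Convex ℝ (e '' K) := hconv.linear_image e.toLinearMap
  obtain ⟨_, ⟨u, hu, rfl⟩, hmin⟩ := exists_norm_eq_iInf_of_complete_convex (hne.image e)
    (e.toHomeomorph.isClosedMap K hclosed).isComplete hconv' (e s)
  refine ⟨u, hu, fun w hw => ?_⟩
  simpa [e, EuclideanSpace.inner_eq_star_dotProduct] using
    (norm_eq_iInf_iff_real_inner_le_zero hconv' ⟨u, hu, rfl⟩).1 hmin (e w) ⟨w, hw, rfl⟩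

theorem eq_of_forall_le_of_quadratic_growth {f : (ι → ℝ) → ℝ} {π₀ π : ι → ℝ}
    (hgrowth : ∀ ρ, f π₀ + (1 / 2) * ∑ i, (ρ i - π₀ i) ^ 2 ≤ f ρ) (hπ : ∀ ρ, f π ≤ f ρ) :
    π = π₀ := by
  have hsq_nonneg : ∀ i ∈ univ, 0 ≤ (π i - π₀ i) ^ 2 := fun i _ => sq_nonneg _
  have hsum : ∑ i, (π i - π₀ i) ^ 2 = 0 :=
    le_antisymm (by linarith [hgrowth π, hπ π₀]) (sum_nonneg hsq_nonneg)
  funext i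
  exact sub_eq_zero.1 (pow_eq_zero_iff two_ne_zero |>.1 <|
    (sum_eq_zero_iff_of_nonneg hsq_nonneg).1 hsum i (mem_univ i))

variable [LinearOrder ι]

def edgeDivergence : (ι → ι → ℝ) →ₗ[ℝ] ι → ℝ where
  toFun z i := (∑ j, if i < j then z i j else 0) - ∑ j, if j < i then z j i else 0
  map_add' z w := by
    ext i
    simp only [Pi.add_apply, ite_add_zero, sum_add_distrib]
    ring
  map_smul' c z := by
    ext i
    simp only [Pi.smul_apply, smul_eq_mul, RingHom.id_apply, mul_sub, mul_sum, mul_ite, mul_zero]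

def pairwiseVariation (π : ι → ℝ) : ℝ := ∑ i, ∑ j, if i < j then |π i - π j| else 0

def clusteringSet (lam : ℝ) : Set (ι → ℝ) := edgeDivergence '' {z | ∀ i j, i < j → |z i j| ≤ lam}

theorem edgeDivergence_dotProduct (z : ι → ι → ℝ) (π : ι → ℝ) :
    edgeDivergence z ⬝ᵥ π = ∑ i, ∑ j, if i < j then z i j * (π i - π j) else 0 := by
  have hswap : ∑ i, (∑ j, if j < i then z j i else 0) * π i
      = ∑ i, ∑ j, if i < j then z i j * π j else 0 := by
    simp only [sum_mul, ite_mul, zero_mul]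
    exact sum_comm
  simp only [dotProduct, edgeDivergence, LinearMap.coe_mk, AddHom.coe_mk, sub_mul, sum_sub_distrib,
    hswap]
  simp only [← sum_sub_distrib, sum_mul, ite_mul, zero_mul, mul_sub]
  refine sum_congr rfl fun i _ => sum_congr rfl fun j _ => ?_
  split_ifs <;> ring

theorem edgeDivergence_dotProduct_le {lam : ℝ} {z : ι → ι → ℝ}
    (hz : ∀ i j, i < j → |z i j| ≤ lam) (π : ι → ℝ) :
    edgeDivergence z ⬝ᵥ π ≤ lam * pairwiseVariation π := by
  rw [edgeDivergence_dotProduct, pairwiseVariation, mul_sum]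
  refine sum_le_sum fun i _ => ?_
  rw [mul_sum]
  refine sum_le_sum fun j _ => ?_
  split_ifs with hij
  · calc z i j * (π i - π j) ≤ |z i j| * |π i - π j| := by rw [← abs_mul]; exact le_abs_self _
      _ ≤ lam * |π i - π j| := by gcongr; exact hz i j hij
  · rw [mul_zero]

theorem edgeDivergence_sign_dotProduct (lam : ℝ) (π : ι → ℝ) :
    edgeDivergence (fun i j => lam * SignType.sign (π i - π j)) ⬝ᵥ π =
      lam * pairwiseVariation π := by
  simp only [edgeDivergence_dotProduct, pairwiseVariation, mul_sum, mul_ite, mul_zero, mul_assoc,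
    sign_mul_self]

theorem abs_mul_sign_le {lam : ℝ} (hlam : 0 ≤ lam) (x : ℝ) : |lam * SignType.sign x| ≤ lam := by
  rw [abs_mul, abs_of_nonneg hlam]
  refine mul_le_of_le_one_right hlam ?_
  rcases SignType.trichotomy (SignType.sign x) with h | h | h <;> simp [h]

theorem edgeDivergence_restrict (z : ι → ι → ℝ) :
    edgeDivergence (fun i j => if i < j then z i j else 0) = edgeDivergence z := by
  ext i
  simp only [edgeDivergence, LinearMap.coe_mk, AddHom.coe_mk]
  congr 1 <;> refine sum_congr rfl fun j _ => ?_ <;> split_ifs <;> rfl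

theorem clusteringSet_eq_image_pi {lam : ℝ} (hlam : 0 ≤ lam) :
    clusteringSet lam =
      edgeDivergence '' Set.univ.pi fun _ : ι => Set.univ.pi fun _ : ι => Set.Icc (-lam) lam := by
  apply subset_antisymm
  · rintro _ ⟨z, hz, rfl⟩
    refine ⟨fun i j => if i < j then z i j else 0, fun i _ j _ => ?_, edgeDivergence_restrict z⟩
    dsimp only
    split_ifs with h
    exacts [abs_le.1 (hz i j h), ⟨neg_nonpos.2 hlam, hlam⟩]
  · rintro _ ⟨z, hz, rfl⟩
    exact ⟨z, fun i j _ => abs_le.2 (hz i trivial j trivial), rfl⟩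

theorem zero_mem_clusteringSet {lam : ℝ} (hlam : 0 ≤ lam) : (0 : ι → ℝ) ∈ clusteringSet lam :=
  ⟨0, fun _ _ _ => by simpa using hlam, map_zero _⟩

theorem isCompact_clusteringSet {lam : ℝ} (hlam : 0 ≤ lam) :
    IsCompact (clusteringSet (ι := ι) lam) := by
  rw [clusteringSet_eq_image_pi hlam]
  exact (isCompact_univ_pi fun _ => isCompact_univ_pi fun _ => isCompact_Icc).image
    edgeDivergence.continuous_of_finiteDimensional

theorem convex_clusteringSet {lam : ℝ} (hlam : 0 ≤ lam) :
    Convex ℝ (clusteringSet (ι := ι) lam) := by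
  rw [clusteringSet_eq_image_pi hlam]
  exact (convex_pi fun _ _ => convex_pi fun _ _ => convex_Icc _ _).linear_image edgeDivergence

end

theorem eunorm_sub_le_of_dotProduct_nonpos {k : ℕ} {s u w : Fin k → ℝ}
    (h : (w - u) ⬝ᵥ (s - u) ≤ 0) : eunorm (s - u) ≤ eunorm (s - w) := by
  refine Real.sqrt_le_sqrt ?_
  have hexpand : ∑ i, (s - w) i ^ 2
      = ∑ i, (s - u) i ^ 2 - 2 * ((w - u) ⬝ᵥ (s - u)) + ∑ i, (w - u) i ^ 2 := by
    simp only [dotProduct, mul_sum, ← sum_sub_distrib, ← sum_add_distrib, Pi.sub_apply]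
    exact sum_congr rfl fun i _ => by ring
  have hsq : 0 ≤ ∑ i, (w - u) i ^ 2 := sum_nonneg fun i _ => sq_nonneg _
  linarith

theorem pfun_quadratic_growth {N : ℕ} {lam : ℝ} (hlam : 0 ≤ lam) {s u : Fin N → ℝ}
    (hu : u ∈ clusteringSet lam) (hproj : ∀ w ∈ clusteringSet lam, (w - u) ⬝ᵥ (s - u) ≤ 0)
    (π : Fin N → ℝ) :
    pfun lam s (s - u) + (1 / 2) * ∑ i, (π i - (s - u) i) ^ 2 ≤ pfun lam s π := by
  obtain ⟨z, hz, rfl⟩ := hu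
  set u := edgeDivergence z
  have hsupport : lam * pairwiseVariation (s - u) ≤ u ⬝ᵥ (s - u) := by
    have := hproj _ ⟨fun i j => lam * SignType.sign ((s - u) i - (s - u) j),
      fun i j _ => abs_mul_sign_le hlam _, rfl⟩
    rw [sub_dotProduct, edgeDivergence_sign_dotProduct] at this
    linarith
  have hπ := edgeDivergence_dotProduct_le hz π
  have hcompleteSquare :
      ∑ i, ((1 / 2) * u i ^ 2 + u i * (s i - u i) + (1 / 2) * (π i - (s i - u i)) ^ 2) =
        ∑ i, ((1 / 2) * (π i - s i) ^ 2 + u i * π i) :=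
    sum_congr rfl fun i _ => by ring
  simp only [sum_add_distrib, ← mul_sum] at hcompleteSquare
  simp only [pfun, dotProduct, Pi.sub_apply, pairwiseVariation, sub_sub_cancel_left, neg_sq]
    at hsupport hπ ⊢
  linarith

theorem stmt_11_general {N : ℕ} (lam : ℝ) (hlam : 0 < lam) (s : Fin N → ℝ)
    (K : Set (Fin N → ℝ))
    (hK : K = {u | ∃ z : Fin N → Fin N → ℝ, (∀ i j, i < j → |z i j| ≤ lam) ∧
      ∀ i, u i = (∑ j, if i < j then z i j else 0) - (∑ j, if j < i then z j i else 0)}) :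
    K.Nonempty ∧ IsCompact K ∧ Convex ℝ K ∧
    (∃! πstar : Fin N → ℝ, ∀ π, pfun lam s πstar ≤ pfun lam s π) ∧
    ∀ πstar : Fin N → ℝ, (∀ π, pfun lam s πstar ≤ pfun lam s π) →
      (s - πstar) ∈ K ∧ ∀ u ∈ K, eunorm (s - (s - πstar)) ≤ eunorm (s - u) := by
  obtain rfl : K = clusteringSet lam := by
    ext u
    simp only [hK, clusteringSet, Set.mem_ofPred_eq, Set.mem_image, funext_iff, eq_comm]
    rfl
  obtain ⟨u, hu, hproj⟩ := exists_mem_forall_dotProduct_sub_nonpos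
    ⟨0, zero_mem_clusteringSet hlam.le⟩ (isCompact_clusteringSet hlam.le).isClosed
    (convex_clusteringSet hlam.le) s
  have hgrowth := pfun_quadratic_growth hlam.le hu hproj
  have huniq : ∀ π, (∀ ρ, pfun lam s π ≤ pfun lam s ρ) → π = s - u :=
    fun π hπ => eq_of_forall_le_of_quadratic_growth hgrowth hπ
  have hmin : ∀ π, pfun lam s (s - u) ≤ pfun lam s π :=
    fun π => le_of_add_le_of_nonneg_left (hgrowth π) (by positivity)
  refine ⟨⟨0, zero_mem_clusteringSet hlam.le⟩, isCompact_clusteringSet hlam.le,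
    convex_clusteringSet hlam.le, ⟨s - u, hmin, huniq⟩, fun π hπ => ?_⟩
  obtain rfl := huniq π hπ
  rw [sub_sub_cancel]
  exact ⟨hu, fun w hw => eunorm_sub_le_of_dotProduct_nonpos (hproj w hw)⟩

/-- the set `K` of vectors `u` with `u_i = Σ_{j>i} z_{ij} − Σ_{j<i} z_{ji}`
for some `z` with `|z_{ij}| ≤ λ` is nonempty, compact and convex; `p_s` has a unique
minimizer `π*` over `ℝ^N`; and the metric projection of `s` onto `K` is `s − π*`. -/
theorem stmt_11 {N : ℕ} (hN : 1 ≤ N) (lam : ℝ) (hlam : 0 < lam) (s : Fin N → ℝ)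
    (K : Set (Fin N → ℝ))
    (hK : K = {u | ∃ z : Fin N → Fin N → ℝ, (∀ i j, i < j → |z i j| ≤ lam) ∧
      ∀ i, u i = (∑ j, if i < j then z i j else 0) - (∑ j, if j < i then z j i else 0)}) :
    K.Nonempty ∧ IsCompact K ∧ Convex ℝ K ∧
    (∃! πstar : Fin N → ℝ, ∀ π, pfun lam s πstar ≤ pfun lam s π) ∧
    ∀ πstar : Fin N → ℝ, (∀ π, pfun lam s πstar ≤ pfun lam s π) →
      (s - πstar) ∈ K ∧ ∀ u ∈ K, eunorm (s - (s - πstar)) ≤ eunorm (s - u) :=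
  stmt_11_general lam hlam s K hK
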